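/- arXiv:1212.5838 — 8 statements merged into one kernel-verified Lean document; each statement's English description precedes it below -/
import Mathlib

section
/- Let A be a field, C a finite-dimensional local commutative A-algebra whose residue field is A (i.e., the natural A-algebra map A → C/m_C is bijective, where m_C is the maximal ideal of C), and L a field extension of A. Then the base-change L ⊗[A] C is a local ring, its maximal ideal is nilpotent, and the composite map L → L ⊗[A] C → (L ⊗[A] C)/m (sending l to l ⊗ 1 followed by the residue map, where m is the maximal ideal of L ⊗[A] C) is bijective. -/
/-!
Tensoring the residue map `C → C ⧸ m_C ≅ A` with `L` identifies `(L ⊗[A] C) ⧸ m_C (L ⊗[A] C)`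
with `L ⊗[A] A ≅ L`, so the extended ideal `m_C (L ⊗[A] C)` is maximal with residue field `L`.
It is nilpotent because `m_C` is (`C` is Artinian), hence contained in every prime ideal, so it
is the only maximal ideal.
-/

open IsLocalRing TensorProduct Algebra.TensorProduct

theorem Ideal.isNilpotent_map {R S F : Type*} [CommSemiring R] [CommSemiring S] [FunLike F R S]
    [RingHomClass F R S] (f : F) {I : Ideal R} (hI : IsNilpotent I) : IsNilpotent (I.map f) := by
  obtain ⟨n, hn⟩ := hI
  exact ⟨n, by rw [← Ideal.map_pow, hn]; exact Ideal.map_bot⟩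

theorem Ideal.eq_of_isMaximal_of_isNilpotent {R : Type*} [CommSemiring R] {I m : Ideal R}
    (hI : IsNilpotent I) (hImax : I.IsMaximal) (hm : m.IsMaximal) : m = I := by
  obtain ⟨n, hn⟩ := hI
  have hIm : I ≤ m := hm.isPrime.le_of_pow_le (by rw [hn]; exact bot_le)
  exact (hImax.eq_of_le hm.ne_top hIm).symm

theorem IsLocalRing.isNilpotent_maximalIdeal_of_isArtinianRing (R : Type*) [CommRing R]
    [IsLocalRing R] [IsArtinianRing R] : IsNilpotent (maximalIdeal R) :=
  jacobson_eq_maximalIdeal (⊥ : Ideal R) bot_ne_top ▸ IsArtinianRing.isNilpotent_jacobson_bot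

theorem Algebra.TensorProduct.bijective_algebraMap_quotient_map_includeRight
    {R C L : Type*} [CommRing R] [CommRing C] [Algebra R C] [CommRing L] [Algebra R L]
    (I : Ideal C) (h : Function.Bijective (algebraMap R (C ⧸ I))) :
    Function.Bijective
      (algebraMap L ((L ⊗[R] C) ⧸ I.map (includeRight : C →ₐ[R] L ⊗[R] C))) := by
  let e : R ≃ₐ[R] C ⧸ I := AlgEquiv.ofBijective (Algebra.ofId R _) h
  let residue : L ≃ₐ[L] (L ⊗[R] C) ⧸ I.map (includeRight : C →ₐ[R] L ⊗[R] C) :=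
    (Algebra.TensorProduct.rid R L L).symm.trans <|
      (Algebra.TensorProduct.congr AlgEquiv.refl e).trans (tensorQuotientEquiv L C L I)
  exact bijective_algebraMap_of_linearEquiv residue.toLinearEquiv

/-- Let `A` be a field, `C` a finite-dimensional local commutative `A`-algebra
whose residue field is `A` (i.e. the natural map `A → C/m_C` is bijective), and `L` a field
extension of `A`.  Then `L ⊗[A] C` is a local ring, its maximal ideal is nilpotent, and the
composite `L → L ⊗[A] C → (L ⊗[A] C)/m` is bijective.  (Locality is expressed by saying that
`L ⊗[A] C` is a local ring, and the claims about "its maximal ideal" are stated for every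
maximal ideal, which is equivalent since a local ring has a unique maximal ideal.) -/
theorem baseChange_isLocalRing_and_nilpotent_maximalIdeal_and_residue_bijective
    {A C L : Type*} [Field A] [CommRing C] [Algebra A C] [FiniteDimensional A C]
    [IsLocalRing C]
    (hres : Function.Bijective (algebraMap A (C ⧸ IsLocalRing.maximalIdeal C)))
    [Field L] [Algebra A L] :
    IsLocalRing (TensorProduct A L C) ∧
      ∀ m : Ideal (TensorProduct A L C), m.IsMaximal →
        IsNilpotent m ∧
          Function.Bijective
            ((Ideal.Quotient.mk m).comp (algebraMap L (TensorProduct A L C))) := by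
  have : IsArtinianRing C := IsArtinianRing.of_finite A C
  set I := (maximalIdeal C).map (includeRight : C →ₐ[A] TensorProduct A L C)
  have hresI : Function.Bijective (algebraMap L (TensorProduct A L C ⧸ I)) :=
    bijective_algebraMap_quotient_map_includeRight _ hres
  have hImax : I.IsMaximal := Ideal.Quotient.maximal_of_isField I <|
    (RingEquiv.ofBijective _ hresI).symm.toMulEquiv.isField (Field.toIsField L)
  have hInil : IsNilpotent I :=
    Ideal.isNilpotent_map _ (isNilpotent_maximalIdeal_of_isArtinianRing C)
  have huniq (m : Ideal (TensorProduct A L C)) (hm : m.IsMaximal) : m = I :=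
    Ideal.eq_of_isMaximal_of_isNilpotent hInil hImax hm
  refine ⟨.of_unique_max_ideal ⟨I, hImax, huniq⟩, fun m hm => ?_⟩
  obtain rfl := huniq m hm
  exact ⟨hInil, hresI⟩
end

section
/- Let A be a field, B a finite-dimensional commutative A-algebra all of whose residue fields are A, and L a field extension of A. Then an element x ∈ L ⊗[A] B is a unit if and only if ρ^L(x) ≠ 0 for every A-algebra homomorphism ρ : B → A. -/
/-- For an `A`-algebra homomorphism `ρ : B →ₐ[A] A`, the induced `A`-algebra homomorphism
`ρ^L : L ⊗[A] B → L`, determined by `l ⊗ b ↦ l • ρ b`. -/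
noncomputable def rhoHom (A L B : Type*) [CommSemiring A] [CommRing L] [Algebra A L]
    [CommRing B] [Algebra A B] (ρ : B →ₐ[A] A) : TensorProduct A L B →ₐ[A] L :=
  (Algebra.TensorProduct.rid A A L).toAlgHom.comp
    (Algebra.TensorProduct.map (AlgHom.id A L) ρ)

theorem rhoHom_tmul (A L B : Type*) [CommSemiring A] [CommRing L] [Algebra A L]
    [CommRing B] [Algebra A B] (ρ : B →ₐ[A] A) (l : L) (b : B) :
    rhoHom A L B ρ (l ⊗ₜ[A] b) = ρ b • l := by
  simp [rhoHom]

theorem key_mem (A L B : Type*) [CommRing A] [CommRing L] [Algebra A L]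
    [CommRing B] [Algebra A B] (ρ : B →ₐ[A] A) (z : TensorProduct A L B) :
    z - (rhoHom A L B ρ z) ⊗ₜ[A] (1 : B) ∈
      Ideal.map (Algebra.TensorProduct.includeRight : B →ₐ[A] TensorProduct A L B).toRingHom
        (RingHom.ker ρ) := by
  induction z using TensorProduct.induction_on with
  | zero => simp
  | tmul l b =>
      have h1 : (ρ b • l) ⊗ₜ[A] (1 : B) = l ⊗ₜ[A] (algebraMap A B (ρ b)) := by
        rw [TensorProduct.smul_tmul, Algebra.algebraMap_eq_smul_one]
      rw [rhoHom_tmul, h1, ← TensorProduct.tmul_sub]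
      have h2 : b - algebraMap A B (ρ b) ∈ RingHom.ker ρ := by
        simp [RingHom.mem_ker, map_sub]
      have h3 : (1 : L) ⊗ₜ[A] (b - algebraMap A B (ρ b)) ∈
          Ideal.map (Algebra.TensorProduct.includeRight :
            B →ₐ[A] TensorProduct A L B).toRingHom (RingHom.ker ρ) :=
        Ideal.mem_map_of_mem _ h2
      have h4 : l ⊗ₜ[A] (b - algebraMap A B (ρ b)) =
          (l ⊗ₜ[A] (1 : B)) * ((1 : L) ⊗ₜ[A] (b - algebraMap A B (ρ b))) := by
        rw [Algebra.TensorProduct.tmul_mul_tmul, mul_one, one_mul]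
      rw [h4]
      exact Ideal.mul_mem_left _ _ h3
  | add y z hy hz =>
      have : y + z - (rhoHom A L B ρ (y + z)) ⊗ₜ[A] (1 : B) =
          (y - (rhoHom A L B ρ y) ⊗ₜ[A] (1 : B)) + (z - (rhoHom A L B ρ z) ⊗ₜ[A] (1 : B)) := by
        rw [map_add, TensorProduct.add_tmul]; abel
      rw [this]
      exact Ideal.add_mem _ hy hz

/-- Let `A` be a field, `B` a finite-dimensional commutative `A`-algebra all of
whose residue fields are `A`, and `L` a field extension of `A`.  Then an element
`x ∈ L ⊗[A] B` is a unit if and only if `ρ^L(x) ≠ 0` for every `A`-algebra homomorphism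
`ρ : B → A`. -/
theorem isUnit_iff_rhoHom_ne_zero
    {A B L : Type*} [Field A] [CommRing B] [Algebra A B] [FiniteDimensional A B]
    [Field L] [Algebra A L]
    (hres : ∀ m : Ideal B, m.IsMaximal → Function.Bijective (algebraMap A (B ⧸ m)))
    (x : TensorProduct A L B) :
    IsUnit x ↔ ∀ ρ : B →ₐ[A] A, rhoHom A L B ρ x ≠ 0 := by
  constructor
  · intro h ρ
    exact (h.map (rhoHom A L B ρ)).ne_zero
  · intro h
    by_contra hx
    obtain ⟨m, hm, hxm⟩ := exists_max_ideal_of_mem_nonunits hx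
    -- pull back to B
    set ι : B →ₐ[A] TensorProduct A L B := Algebra.TensorProduct.includeRight
    set n : Ideal B := Ideal.comap ι.toRingHom m with hn
    haveI : m.IsPrime := hm.isPrime
    haveI hnp : n.IsPrime := Ideal.IsPrime.comap _
    haveI : IsDomain (B ⧸ n) := Ideal.Quotient.isDomain n
    have hnmax : n.IsMaximal := by
      apply Ideal.Quotient.maximal_of_isField
      exact isField_of_isIntegral_of_isField' (Field.toIsField A)
    have hbij := hres n hnmax
    let e : A ≃ₐ[A] (B ⧸ n) := AlgEquiv.ofBijective (Algebra.ofId A (B ⧸ n)) hbij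
    let ρ : B →ₐ[A] A := e.symm.toAlgHom.comp (Ideal.Quotient.mkₐ A n)
    have hker : RingHom.ker ρ = n := by
      ext b
      simp only [RingHom.mem_ker, ρ, AlgHom.coe_comp, Function.comp_apply,
        AlgEquiv.toAlgHom_eq_coe, AlgHom.coe_coe, Ideal.Quotient.mkₐ_eq_mk]
      constructor
      · intro hb
        have : (Ideal.Quotient.mk n) b = 0 := by
          have := congrArg e hb
          simpa using this
        exact (Ideal.Quotient.eq_zero_iff_mem).mp this
      · intro hb
        rw [Ideal.Quotient.eq_zero_iff_mem.mpr hb, map_zero]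
    -- the extended ideal is contained in m
    have hext : Ideal.map ι.toRingHom (RingHom.ker ρ) ≤ m := by
      rw [hker]
      exact Ideal.map_comap_le
    -- kernel of rhoHom ρ is maximal
    have hsurj : Function.Surjective (rhoHom A L B ρ) := by
      intro l
      exact ⟨l ⊗ₜ[A] 1, by rw [rhoHom_tmul]; simp⟩
    have hkmax : (RingHom.ker (rhoHom A L B ρ).toRingHom).IsMaximal :=
      RingHom.ker_isMaximal_of_surjective _ hsurj
    have hkle : RingHom.ker (rhoHom A L B ρ).toRingHom ≤ m := by
      intro z hz
      have hz0 : rhoHom A L B ρ z = 0 := hz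
      have := key_mem A L B ρ z
      rw [hz0] at this
      simpa using hext this
    have hmeq : m = RingHom.ker (rhoHom A L B ρ).toRingHom :=
      (hkmax.eq_of_le hm.ne_top hkle).symm
    have : rhoHom A L B ρ x = 0 := by
      have : x ∈ RingHom.ker (rhoHom A L B ρ).toRingHom := hmeq ▸ hxm
      exact this
    exact h ρ this
end

section
/- Let A be a field of characteristic zero, B a finite-dimensional commutative A-algebra all of whose residue fields are A, and π : B → A an A-algebra homomorphism. Let L be an algebraically closed field extension of A, F a subfield of L containing A, and e : F → L ⊗[A] B an A-algebra homomorphism such that π^L ∘ e is the inclusion F ↪ L. Let F' = {x ∈ L : x is algebraic over F}. Then there exists an A-algebra homomorphism e' : F' → L ⊗[A] B extending e such that π^L ∘ e' is the inclusion F' ↪ L. -/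
theorem nonempty_algHom_quotient_of_isIntegral {F K L C : Type*} [Field F] [Field K]
    [Algebra F K] [Algebra.IsAlgebraic F K] [Field L] [IsAlgClosed L] [CommRing C]
    [Algebra L C] [Algebra.IsIntegral L C] [Algebra F C] (m : Ideal C) [m.IsMaximal] :
    Nonempty (K →ₐ[F] C ⧸ m) := by
  let ψ : L ≃+* C ⧸ m := .ofBijective _ IsAlgClosed.algebraMap_bijective_of_isIntegral
  let : Algebra F L := (ψ.symm.toRingHom.comp (algebraMap F (C ⧸ m))).toAlgebra
  let ψF : L ≃ₐ[F] C ⧸ m := { ψ with commutes' := fun _ ↦ ψ.apply_symm_apply _ }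
  exact ⟨ψF.toAlgHom.comp (IsAlgClosed.lift (M := L))⟩

theorem exists_algHom_lift_of_isSeparable {F K L C : Type*} [Field F] [Field K] [Algebra F K]
    [Algebra.IsSeparable F K] [Field L] [IsAlgClosed L] [CommRing C] [Algebra L C]
    [Module.Finite L C] [Algebra F C] (p : C →+* L) (hp : Function.Surjective p)
    (f : K →+* L) (hf : ∀ x, f (algebraMap F K x) = p (algebraMap F C x)) :
    ∃ g : K →ₐ[F] C, ∀ y, p (g y) = f y := by
  classical
  have : IsArtinianRing C := .of_finite L C
  let m₀ : MaximalSpectrum C := ⟨RingHom.ker p, RingHom.ker_isMaximal_of_surjective p hp⟩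
  let χ : C ⧸ RingHom.ker p ≃+* L := RingHom.quotientKerEquivOfSurjective hp
  let τ₀ : K →ₐ[F] C ⧸ m₀.asIdeal :=
    { χ.symm.toRingHom.comp f with
      commutes' := fun x ↦ χ.symm_apply_eq.2 (hf x) }
  let τ : ∀ m : MaximalSpectrum C, K →ₐ[F] C ⧸ m.asIdeal :=
    Function.update (fun m ↦ (nonempty_algHom_quotient_of_isIntegral (L := L) m.asIdeal).some)
      m₀ τ₀
  let g₀ : K →ₐ[F] C ⧸ nilradical C :=
    ((IsArtinianRing.quotNilradicalEquivPi C).restrictScalars F).symm.toAlgHom.comp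
      (AlgHom.pi τ)
  have := Algebra.FormallyEtale.of_isSeparable F K
  obtain ⟨g, hg⟩ := Algebra.FormallySmooth.exists_lift _
    (IsNoetherianRing.isNilpotent_nilradical C) g₀
  refine ⟨g, fun y ↦ ?_⟩
  calc p (g y) = χ (IsArtinianRing.quotNilradicalEquivPi C (Ideal.Quotient.mk _ (g y)) m₀) := rfl
    _ = χ (τ m₀ y) := by
      rw [← Ideal.Quotient.mkₐ_eq_mk F, ← AlgHom.comp_apply, hg]
      exact congr_arg χ (congr_fun
        (((IsArtinianRing.quotNilradicalEquivPi C).restrictScalars F).apply_symm_apply _) m₀)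
    _ = f y := by simp [τ, τ₀]

theorem rhoHom_surjective (A L B : Type*) [CommSemiring A] [CommRing L] [Algebra A L]
    [CommRing B] [Algebra A B] (ρ : B →ₐ[A] A) : Function.Surjective (rhoHom A L B ρ) :=
  fun l ↦ ⟨l ⊗ₜ 1, by simp [rhoHom]⟩

theorem exists_extension_to_relative_algebraic_closure_general
    {A B L : Type*} [Field A] [CharZero A] [CommRing B] [Algebra A B]
    [FiniteDimensional A B]
    (π : B →ₐ[A] A)
    [Field L] [Algebra A L] [IsAlgClosed L]
    (F : IntermediateField A L)
    (F' : Subalgebra A L) (hF' : ∀ x : L, x ∈ F' ↔ IsAlgebraic F x)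
    (e : F →ₐ[A] TensorProduct A L B)
    (he : ∀ x : F, rhoHom A L B π (e x) = (x : L)) :
    ∃ e' : F' →ₐ[A] TensorProduct A L B,
      (∀ (x : F) (hx : (x : L) ∈ F'), e' ⟨(x : L), hx⟩ = e x) ∧
      ∀ y : F', rhoHom A L B π (e' y) = (y : L) := by
  let : Algebra F (TensorProduct A L B) := e.toAlgebra
  have : CharZero F := charZero_of_injective_algebraMap (algebraMap A F).injective
  obtain ⟨g, hg⟩ := exists_algHom_lift_of_isSeparable (K := algebraicClosure F L)
    (rhoHom A L B π : TensorProduct A L B →+* L) (rhoHom_surjective A L B π)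
    (algebraicClosure F L).val (fun x ↦ (he x).symm)
  let j : F' →+* algebraicClosure F L := (F'.val : F' →+* L).codRestrict _
    fun y ↦ mem_algebraicClosure_iff.2 ((hF' y).1 y.2)
  refine ⟨{ (g : _ →+* _).comp j with
    commutes' := fun a ↦ (g.commutes (algebraMap A F a)).trans (e.commutes a) },
    fun x _ ↦ g.commutes x, fun y ↦ hg (j y)⟩

/-- Let `A` be a field of characteristic zero, `B` a finite-dimensional
commutative `A`-algebra all of whose residue fields are `A`, and `π : B → A` an `A`-algebra
homomorphism.  Let `L` be an algebraically closed field extension of `A`, `F` a subfield of `L`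
containing `A`, and `e : F → L ⊗[A] B` an `A`-algebra homomorphism with `π^L ∘ e` the inclusion
`F ↪ L`.  Let `F' = {x ∈ L : x is algebraic over F}`.  Then there is an `A`-algebra
homomorphism `e' : F' → L ⊗[A] B` extending `e` with `π^L ∘ e'` the inclusion `F' ↪ L`. -/
theorem exists_extension_to_relative_algebraic_closure
    {A B L : Type*} [Field A] [CharZero A] [CommRing B] [Algebra A B]
    [FiniteDimensional A B]
    (hres : ∀ m : Ideal B, m.IsMaximal → Function.Bijective (algebraMap A (B ⧸ m)))
    (π : B →ₐ[A] A)
    [Field L] [Algebra A L] [IsAlgClosed L]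
    (F : IntermediateField A L)
    (F' : Subalgebra A L) (hF' : ∀ x : L, x ∈ F' ↔ IsAlgebraic F x)
    (e : F →ₐ[A] TensorProduct A L B)
    (he : ∀ x : F, rhoHom A L B π (e x) = (x : L)) :
    ∃ e' : F' →ₐ[A] TensorProduct A L B,
      (∀ (x : F) (hx : (x : L) ∈ F'), e' ⟨(x : L), hx⟩ = e x) ∧
      ∀ y : F', rhoHom A L B π (e' y) = (y : L) :=
  exists_extension_to_relative_algebraic_closure_general π F F' hF' e he
end

section
/- Let A be a field of characteristic zero, B a finite-dimensional commutative A-algebra all of whose residue fields are A, L an algebraically closed field extension of A, F a subfield of L containing A, F' = {x ∈ L : x is algebraic over F}, and e : F → L ⊗[A] B an A-algebra homomorphism. For each A-algebra homomorphism ρ : B → A set σ_ρ := ρ^L ∘ e : F → L. Suppose that for each A-algebra homomorphism ρ : B → A we are given an A-algebra homomorphism σ'_ρ : F' → L extending σ_ρ. Then there exists exactly one A-algebra homomorphism e' : F' → L ⊗[A] B extending e such that ρ^L ∘ e' = σ'_ρ for every A-algebra homomorphism ρ : B → A. -/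
theorem AlgHom.eq_of_ker_eq {K S : Type*} [CommRing K] [Ring S] [Algebra K S]
    {φ ψ : S →ₐ[K] K} (h : RingHom.ker φ = RingHom.ker ψ) : φ = ψ := by
  ext x
  have hx : x - algebraMap K S (ψ x) ∈ RingHom.ker φ := by
    rw [h, RingHom.mem_ker, map_sub, AlgHom.commutes, Algebra.algebraMap_self_apply, sub_self]
  rwa [RingHom.mem_ker, map_sub, AlgHom.commutes, Algebra.algebraMap_self_apply, sub_eq_zero] at hx

section Points

variable {K S : Type*} [Field K] [CommRing S] [Algebra K S]

theorem AlgHom.ker_isMaximal (φ : S →ₐ[K] K) : (RingHom.ker φ).IsMaximal :=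
  RingHom.ker_isMaximal_of_surjective _ fun k => ⟨algebraMap K S k, φ.commutes k⟩

theorem exists_algHom_ker_eq_of_isMaximal [IsAlgClosed K] [Algebra.IsIntegral K S]
    (M : Ideal S) [M.IsMaximal] : ∃ φ : S →ₐ[K] K, RingHom.ker φ = M := by
  let := Ideal.Quotient.field M
  let ε := AlgEquiv.ofBijective (Algebra.ofId K (S ⧸ M))
    IsAlgClosed.algebraMap_bijective_of_isIntegral
  refine ⟨ε.symm.toAlgHom.comp (Ideal.Quotient.mkₐ K M), ?_⟩
  ext x
  simp [RingHom.mem_ker, Ideal.Quotient.eq_zero_iff_mem]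

variable {ι : Type*}

theorem AlgHom.pi_surjective_of_injective [_root_.Finite ι] {φ : ι → S →ₐ[K] K}
    (hφ : Function.Injective φ) : Function.Surjective (AlgHom.pi φ) := by
  intro x
  have hcop : Pairwise (Function.onFun IsCoprime fun i => RingHom.ker (φ i)) := fun i j hij =>
    Ideal.isCoprime_iff_sup_eq.mpr <| (φ i).ker_isMaximal.coprime_of_ne (φ j).ker_isMaximal
      fun h => hij (hφ (AlgHom.eq_of_ker_eq h))
  obtain ⟨s, hs⟩ := Ideal.exists_forall_sub_mem_ideal hcop fun i => algebraMap K S (x i)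
  refine ⟨s, funext fun i => ?_⟩
  simpa [RingHom.mem_ker, sub_eq_zero] using hs i

theorem AlgHom.isNilpotent_ker_pi_of_surjective [IsAlgClosed K] [Module.Finite K S]
    {φ : ι → S →ₐ[K] K} (hφ : Function.Surjective φ) :
    IsNilpotent (RingHom.ker (AlgHom.pi φ)) := by
  have : IsArtinianRing S := IsArtinianRing.of_finite K S
  obtain ⟨n, hn⟩ := IsArtinianRing.isNilpotent_jacobson_bot (R := S)
  have hle : RingHom.ker (AlgHom.pi φ) ≤ Ideal.jacobson ⊥ := by
    intro s hs
    rw [Ideal.jacobson, Submodule.mem_sInf]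
    rintro M ⟨-, hM⟩
    obtain ⟨ψ, rfl⟩ := exists_algHom_ker_eq_of_isMaximal (K := K) M
    obtain ⟨i, rfl⟩ := hφ ψ
    exact congrFun hs i
  exact ⟨n, le_bot_iff.mp ((Ideal.pow_right_mono hle n).trans_eq hn)⟩

end Points

theorem AlgHom.ofId_comp_bijective {A B D : Type*} [Field A] [CommRing B] [Algebra A B]
    [IsArtinianRing B] [CommRing D] [IsDomain D] [Algebra A D]
    (hres : ∀ m : Ideal B, m.IsMaximal → Function.Bijective (algebraMap A (B ⧸ m))) :
    Function.Bijective ((Algebra.ofId A D).comp : (B →ₐ[A] A) → B →ₐ[A] D) := by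
  refine ⟨fun ρ₁ ρ₂ h => AlgHom.ext fun b => (algebraMap A D).injective congr($h b), fun ψ => ?_⟩
  have : (RingHom.ker ψ).IsMaximal :=
    (IsArtinianRing.isPrime_iff_isMaximal _).mp (RingHom.ker_isPrime ψ)
  let ε := AlgEquiv.ofBijective (Algebra.ofId A (B ⧸ RingHom.ker ψ)) (hres _ this)
  refine ⟨ε.symm.toAlgHom.comp (Ideal.Quotient.mkₐ A _), AlgHom.ext fun b => ?_⟩
  calc algebraMap A D (ε.symm (Ideal.Quotient.mk _ b))
      = Ideal.kerLiftAlg ψ (ε (ε.symm (Ideal.Quotient.mk _ b))) :=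
        ((Ideal.kerLiftAlg ψ).commutes _).symm
    _ = ψ b := by rw [AlgEquiv.apply_symm_apply, Ideal.kerLiftAlg_mk]

noncomputable def rhoHomL (A L B : Type*) [CommRing A] [CommRing B] [Algebra A B] [CommRing L]
    [Algebra A L] (ρ : B →ₐ[A] A) : TensorProduct A L B →ₐ[L] L :=
  Algebra.TensorProduct.liftEquivRight A L B L ((Algebra.ofId A L).comp ρ)

theorem restrictScalars_rhoHomL {A L B : Type*} [CommRing A] [CommRing B] [Algebra A B]
    [CommRing L] [Algebra A L] (ρ : B →ₐ[A] A) :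
    (rhoHomL A L B ρ).restrictScalars A = rhoHom A L B ρ :=
  Algebra.TensorProduct.ext' fun l b => by
    simp [rhoHomL, rhoHom, Algebra.TensorProduct.liftEquivRight, Algebra.smul_def, mul_comm]

theorem rhoHomL_bijective {A L B : Type*} [Field A] [CommRing B] [Algebra A B] [IsArtinianRing B]
    [CommRing L] [IsDomain L] [Algebra A L]
    (hres : ∀ m : Ideal B, m.IsMaximal → Function.Bijective (algebraMap A (B ⧸ m))) :
    Function.Bijective (rhoHomL A L B) :=
  (Algebra.TensorProduct.liftEquivRight A L B L).bijective.comp (AlgHom.ofId_comp_bijective hres)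

theorem Algebra.FormallyEtale.existsUnique_lift_of_comm_sq {R K E S T : Type*} [CommRing R]
    [CommRing K] [CommRing E] [CommRing S] [CommRing T] [Algebra R K] [Algebra K E] [Algebra R E]
    [IsScalarTower R K E] [Algebra R S] [Algebra R T] [FormallyEtale K E]
    (j : K →ₐ[R] S) (π : S →ₐ[R] T) (hπ : Function.Surjective π)
    (hπ' : IsNilpotent (RingHom.ker π)) (τ : E →ₐ[R] T)
    (hτ : τ.comp (IsScalarTower.toAlgHom R K E) = π.comp j) :
    ∃! f : E →ₐ[R] S, f.comp (IsScalarTower.toAlgHom R K E) = j ∧ π.comp f = τ := by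
  let := j.toAlgebra
  let := (π.comp j).toAlgebra
  have : IsScalarTower R K S := .of_algebraMap_eq fun r => (j.commutes r).symm
  have : IsScalarTower R K T := .of_algebraMap_eq fun r => ((π.comp j).commutes r).symm
  let πK : S →ₐ[K] T := { π with commutes' := fun _ => rfl }
  let τK : E →ₐ[K] T := { τ with commutes' := fun k => congr($hτ k) }
  let f := FormallySmooth.liftOfSurjective τK πK hπ hπ'
  refine ⟨f.restrictScalars R, ⟨AlgHom.ext f.commutes, AlgHom.ext ?_⟩, ?_⟩
  · exact FormallySmooth.liftOfSurjective_apply τK πK hπ hπ'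
  rintro g ⟨hgj, hgτ⟩
  let gK : E →ₐ[K] S := { g with commutes' := fun k => congr($hgj k) }
  have : gK = f := FormallyUnramified.lift_unique' πK hπ' gK f <| AlgHom.ext fun x =>
    congr($hgτ x).trans (FormallySmooth.liftOfSurjective_apply τK πK hπ hπ' x).symm
  exact AlgHom.ext fun x => congr($this x)

/-- Let `A` be a field of characteristic zero, `B` a finite-dimensional
commutative `A`-algebra all of whose residue fields are `A`, `L` an algebraically closed field
extension of `A`, `F` a subfield of `L` containing `A`, `F' = {x ∈ L : x algebraic over F}`,
and `e : F → L ⊗[A] B` an `A`-algebra homomorphism.  For each `ρ : B →ₐ[A] A` set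
`σ_ρ := ρ^L ∘ e : F → L`, and suppose we are given `A`-algebra homomorphisms `σ'_ρ : F' → L`
extending the `σ_ρ`.  Then there is exactly one `A`-algebra homomorphism `e' : F' → L ⊗[A] B`
extending `e` with `ρ^L ∘ e' = σ'_ρ` for every `ρ`. -/
theorem exists_unique_extension_with_prescribed_embeddings
    {A B L : Type*} [Field A] [CharZero A] [CommRing B] [Algebra A B]
    [FiniteDimensional A B]
    (hres : ∀ m : Ideal B, m.IsMaximal → Function.Bijective (algebraMap A (B ⧸ m)))
    [Field L] [Algebra A L] [IsAlgClosed L]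
    (F : IntermediateField A L)
    (F' : Subalgebra A L) (hF' : ∀ x : L, x ∈ F' ↔ IsAlgebraic F x)
    (e : F →ₐ[A] TensorProduct A L B)
    (σ' : (B →ₐ[A] A) → (F' →ₐ[A] L))
    (hσ' : ∀ (ρ : B →ₐ[A] A) (x : F) (hx : (x : L) ∈ F'),
      σ' ρ ⟨(x : L), hx⟩ = rhoHom A L B ρ (e x)) :
    ∃! e' : F' →ₐ[A] TensorProduct A L B,
      (∀ (x : F) (hx : (x : L) ∈ F'), e' ⟨(x : L), hx⟩ = e x) ∧
      ∀ ρ : B →ₐ[A] A, (rhoHom A L B ρ).comp e' = σ' ρ := by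
  have hFF' (x : F) : (x : L) ∈ F' := (hF' x).2 (isAlgebraic_algebraMap x)
  let incl := F.val.codRestrict F' hFF'
  let := incl.toAlgebra
  have : IsScalarTower A F F' := .of_algebraMap_eq fun a => (incl.commutes a).symm
  have hinv (x : L) (hx : x ∈ F') : x⁻¹ ∈ F' := (hF' _).2 ((hF' x).1 hx).inv
  let : Field F' := inferInstanceAs (Field (F'.toIntermediateField hinv))
  let val : F' →ₐ[F] L := { F'.val with commutes' := fun _ => rfl }
  have : Algebra.IsAlgebraic F F' :=
    ⟨fun x => (isAlgebraic_algHom_iff val Subtype.val_injective).mp ((hF' x).1 x.2)⟩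
  have : CharZero L := charZero_of_injective_algebraMap (algebraMap A L).injective
  have : Algebra.FormallyEtale F F' := .of_isSeparable F F'
  have : IsArtinianRing B := IsArtinianRing.of_finite A B
  have hbij := rhoHomL_bijective (L := L) hres
  have hπ : (AlgHom.pi (rhoHomL A L B)).restrictScalars A = AlgHom.pi (rhoHom A L B) :=
    AlgHom.ext fun x => funext fun ρ => congr($(restrictScalars_rhoHomL ρ) x)
  refine existsUnique_congr (fun e' => and_congr ?_ ?_) |>.mp <|
    Algebra.FormallyEtale.existsUnique_lift_of_comm_sq e (AlgHom.pi (rhoHom A L B))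
      (hπ ▸ AlgHom.pi_surjective_of_injective hbij.1)
      (hπ ▸ AlgHom.isNilpotent_ker_pi_of_surjective hbij.2)
      (AlgHom.pi σ') (AlgHom.ext fun x => funext fun ρ => hσ' ρ x (hFF' x))
  · exact AlgHom.ext_iff.trans ⟨fun h x _ => h x, fun h x => h x (hFF' x)⟩
  · simp only [AlgHom.ext_iff, funext_iff, AlgHom.comp_apply, AlgHom.pi_apply]
    exact forall_comm
end

section
/- Let k ⊆ M ⊆ N be field extensions, and let σ be a ring automorphism of N with σ(k) = k and σ(M) ⊆ M. Suppose that M is relatively algebraically closed in N (every element of N that is algebraic over M lies in M) and that M has finite transcendence degree over k. Then σ(M) = M, i.e., σ restricts to an automorphism of M. -/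
/-!
Let `σ` restrict to `τ` on `M`, which is semilinear over the automorphism of `k` induced by `σ`.
Then `τ` maps a finite transcendence basis of `M/k` to an algebraically independent family of
the same size, hence to a transcendence basis; so `M` is algebraic over `τ(M) = σ(M)`.
Pulling back along `σ`, the field `σ⁻¹(M)` is algebraic over `M`, and relative algebraic
closedness of `M` in `N` forces `σ⁻¹(M) ⊆ M`.
-/

open Algebra

namespace RingHom

variable {K L : Type*} [Field K] [Field L]

noncomputable def restrictAlong (σ : L →+* L) (i : K →+* L)
    (h : σ '' Set.range i ⊆ Set.range i) : K →+* K :=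
  (i.rangeRestrictFieldEquiv.symm : i.fieldRange →+* K).comp
    ((σ.comp i).codRestrict i.fieldRange fun x => h ⟨i x, ⟨x, rfl⟩, rfl⟩)

theorem apply_restrictAlong (σ : L →+* L) (i : K →+* L) (h : σ '' Set.range i ⊆ Set.range i)
    (x : K) : i (σ.restrictAlong i h x) = σ (i x) :=
  i.rangeRestrictFieldEquiv_apply_symm_apply _

theorem restrictAlong_surjective {σ : L →+* L} {i : K →+* L}
    (h : σ '' Set.range i = Set.range i) : Function.Surjective (σ.restrictAlong i h.subset) := by
  intro y
  obtain ⟨_, ⟨x, rfl⟩, hx⟩ := h.superset ⟨y, rfl⟩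
  exact ⟨x, i.injective (by rw [apply_restrictAlong, hx])⟩

theorem algebraMap_comp_restrictAlong {k M N : Type*} [Field k] [Field M] [Field N]
    [Algebra k M] [Algebra M N] [Algebra k N] [IsScalarTower k M N] (σ : N →+* N)
    (hk : σ '' Set.range (algebraMap k N) ⊆ Set.range (algebraMap k N))
    (hM : σ '' Set.range (algebraMap M N) ⊆ Set.range (algebraMap M N)) :
    (algebraMap k M).comp (σ.restrictAlong (algebraMap k N) hk) =
      (σ.restrictAlong (algebraMap M N) hM).comp (algebraMap k M) := by
  ext a
  apply (algebraMap M N).injective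
  simp only [coe_comp, Function.comp_apply, apply_restrictAlong,
    ← IsScalarTower.algebraMap_apply]

end RingHom

section Semilinear

variable {k M ι : Type*} [Field k] [Field M] [Algebra k M] [Finite ι] {b : ι → M}
  {e : k →+* k} {τ : M →+* M}

theorem IsTranscendenceBasis.comp_of_comp_eq (hb : IsTranscendenceBasis k b)
    (he : Function.Surjective e) (hτ : (algebraMap k M).comp e = τ.comp (algebraMap k M)) :
    IsTranscendenceBasis k (τ ∘ b) :=
  (hb.1.ringHom_of_comp_eq e τ he τ.injective hτ).isTranscendenceBasis_of_lift_trdeg_le_of_finite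
    hb.lift_cardinalMk_eq_trdeg.ge

theorem IsTranscendenceBasis.isAlgebraic_fieldRange (hb : IsTranscendenceBasis k b)
    (he : Function.Surjective e) (hτ : (algebraMap k M).comp e = τ.comp (algebraMap k M)) :
    Algebra.IsAlgebraic τ.fieldRange M := by
  have halg := (hb.comp_of_comp_eq he hτ).isAlgebraic
  have hle : ∀ a ∈ adjoin k (Set.range (τ ∘ b)), a ∈ τ.fieldRange := by
    intro a ha
    rw [← Subalgebra.mem_toSubring, Algebra.adjoin_eq_ring_closure] at ha
    refine (Subring.closure_le (t := τ.fieldRange.toSubring)).2 ?_ ha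
    rintro _ (⟨c, rfl⟩ | ⟨i, rfl⟩)
    · obtain ⟨c, rfl⟩ := he c
      exact ⟨algebraMap k M c, (RingHom.congr_fun hτ c).symm⟩
    · exact ⟨b i, rfl⟩
  exact halg.ringHom_of_comp_eq
    ((algebraMap (adjoin k (Set.range (τ ∘ b))) M).codRestrict τ.fieldRange fun a => hle a a.2)
    (RingHom.id M) (fun _ _ h => Subtype.ext (congrArg (Subtype.val : τ.fieldRange → M) h))
    Function.surjective_id rfl

end Semilinear

theorem RingEquiv.isAlgebraic_symm_of_isAlgebraic_fieldRange {M N : Type*} [Field M] [Field N]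
    [Algebra M N] (σ : N ≃+* N) (τ : M →+* M)
    (hτ : ∀ x, algebraMap M N (τ x) = σ (algebraMap M N x)) {x : M}
    (hx : IsAlgebraic τ.fieldRange x) : IsAlgebraic M (σ.symm (algebraMap M N x)) := by
  refine hx.ringHom_of_comp_eq τ.rangeRestrictFieldEquiv.symm
    ((σ.symm : N →+* N).comp (algebraMap M N)) (RingEquiv.injective _) ?_
  ext ⟨_, y, rfl⟩
  have hy : τ.rangeRestrictFieldEquiv.symm ⟨τ y, y, rfl⟩ = y :=
    τ.rangeRestrictFieldEquiv.symm_apply_eq.2 rfl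
  change algebraMap M N (τ.rangeRestrictFieldEquiv.symm ⟨τ y, y, rfl⟩) =
    σ.symm (algebraMap M N (τ y))
  rw [hy, hτ, σ.symm_apply_apply]

/-- Let `k ⊆ M ⊆ N` be field extensions and `σ` a ring automorphism of `N`
with `σ(k) = k` and `σ(M) ⊆ M`.  Suppose `M` is relatively algebraically closed in `N` and has
finite transcendence degree over `k` (there is a finite subset of `M` which is a transcendence
basis of `M` over `k`).  Then `σ(M) = M`, i.e. `σ` restricts to an automorphism of `M`.
Here `k` and `M` are realised as the ranges of the structure maps of a tower of fields. -/
theorem automorphism_restricts_to_automorphism_of_finite_trdeg_relatively_closed_subfield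
    {k M N : Type*} [Field k] [Field M] [Field N]
    [Algebra k M] [Algebra M N] [Algebra k N] [IsScalarTower k M N]
    (σ : N ≃+* N)
    (hk : σ '' Set.range (algebraMap k N) = Set.range (algebraMap k N))
    (hM : σ '' Set.range (algebraMap M N) ⊆ Set.range (algebraMap M N))
    (hrel : ∀ x : N, IsAlgebraic M x → x ∈ Set.range (algebraMap M N))
    (hfin : ∃ s : Finset M, IsTranscendenceBasis k fun i : s => (i : M)) :
    σ '' Set.range (algebraMap M N) = Set.range (algebraMap M N) := by
  obtain ⟨s, hs⟩ := hfin
  let τ := (σ : N →+* N).restrictAlong (algebraMap M N) hM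
  have halg : Algebra.IsAlgebraic τ.fieldRange M :=
    hs.isAlgebraic_fieldRange (RingHom.restrictAlong_surjective hk)
      (RingHom.algebraMap_comp_restrictAlong _ hk.subset hM)
  refine hM.antisymm ?_
  rintro _ ⟨m, rfl⟩
  obtain ⟨m', hm'⟩ := hrel _ <| σ.isAlgebraic_symm_of_isAlgebraic_fieldRange τ
    (RingHom.apply_restrictAlong _ _ hM) (halg.isAlgebraic m)
  exact ⟨_, ⟨m', rfl⟩, by rw [hm', RingEquiv.apply_symm_apply]⟩
end

section
/- Let A be a field, B a finite-dimensional commutative A-algebra, and L a field extension of A. Then an element x ∈ L ⊗[A] B is a unit if and only if for every maximal ideal m of B, the image of x under the natural map L ⊗[A] B → L ⊗[A] (B/m) is neither zero nor a zero divisor. -/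
/-!
If `x` is not a unit, it lies in a maximal ideal `M` of `L ⊗[A] B`. The contraction `m` of `M`
to `B` is prime, hence maximal because `B` is Artinian, and the quotient map
`L ⊗[A] B → (L ⊗[A] B) ⧸ M` factors through `L ⊗[A] (B ⧸ m)`. The image of `x` there is a
nonzerodivisor of an Artinian ring, hence a unit, so `x` would be a unit modulo `M`; but it is zero.
-/

open scoped TensorProduct

namespace Algebra.TensorProduct

variable {R S B C : Type*} [CommRing R] [CommRing S] [Algebra R S] [CommRing B] [Algebra R B]
  [CommRing C] [Algebra R C]

theorem exists_comp_map_quotient_eq (φ : S ⊗[R] B →ₐ[R] C) (I : Ideal B)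
    (hI : I ≤ RingHom.ker (φ.comp includeRight)) :
    ∃ ψ : S ⊗[R] (B ⧸ I) →ₐ[R] C,
      ψ.comp (map (AlgHom.id R S) (Ideal.Quotient.mkₐ R I)) = φ := by
  refine ⟨productMap (φ.comp includeLeft) (Ideal.Quotient.liftₐ I (φ.comp includeRight) hI), ?_⟩
  ext
  · simp
  · simp only [AlgHom.coe_comp, AlgHom.coe_restrictScalars', Function.comp_apply,
      includeRight_apply, map_tmul, Ideal.Quotient.mkₐ_eq_mk, productMap_apply_tmul, map_one,
      one_mul]
    rfl

end Algebra.TensorProduct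

open Algebra.TensorProduct in
/-- Let `A` be a field, `B` a finite-dimensional commutative `A`-algebra, and
`L` a field extension of `A`.  Then `x ∈ L ⊗[A] B` is a unit if and only if for every maximal
ideal `m` of `B` the image of `x` under the natural map `L ⊗[A] B → L ⊗[A] (B/m)` is neither
zero nor a zero divisor. -/
theorem isUnit_iff_image_in_residue_baseChange_nonZeroDivisor
    {A B L : Type*} [Field A] [CommRing B] [Algebra A B] [FiniteDimensional A B]
    [Field L] [Algebra A L]
    (x : TensorProduct A L B) :
    IsUnit x ↔ ∀ m : Ideal B, m.IsMaximal →
      (Algebra.TensorProduct.map (AlgHom.id A L) (Ideal.Quotient.mkₐ A m) x ≠ 0 ∧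
        Algebra.TensorProduct.map (AlgHom.id A L) (Ideal.Quotient.mkₐ A m) x ∈
          nonZeroDivisors (TensorProduct A L (B ⧸ m))) := by
  refine ⟨fun hx m _ => ?_, fun h => ?_⟩
  · have hu := hx.map (map (AlgHom.id A L) (Ideal.Quotient.mkₐ A m))
    exact ⟨hu.ne_zero, hu.mem_nonZeroDivisors⟩
  by_contra hx
  obtain ⟨M, hM, hxM⟩ := Ideal.exists_le_maximal _ (Ideal.span_singleton_ne_top hx)
  let m := RingHom.ker ((Ideal.Quotient.mkₐ A M).comp includeRight)
  have : M.IsMaximal := hM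
  have : m.IsPrime := RingHom.ker_isPrime _
  have : IsArtinianRing B := IsArtinianRing.of_finite A B
  have hm : m.IsMaximal := IsArtinianRing.isMaximal_of_isPrime m
  obtain ⟨ψ, hψ⟩ := exists_comp_map_quotient_eq (Ideal.Quotient.mkₐ A M) m le_rfl
  have : IsArtinianRing (L ⊗[A] (B ⧸ m)) :=
    IsArtinianRing.of_finite L (L ⊗[A] (B ⧸ m))
  have hunit := (IsArtinianRing.isUnit_of_mem_nonZeroDivisors (h m hm).2).map ψ
  rw [← AlgHom.comp_apply, hψ, Ideal.Quotient.mkₐ_eq_mk,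
    Ideal.Quotient.eq_zero_iff_mem.mpr (hxM (Ideal.mem_span_singleton_self x))] at hunit
  exact not_isUnit_zero hunit
end

section
/- Let A be a field of characteristic zero, B a finite-dimensional commutative A-algebra, and L a field extension of A. Let R be an integral domain which is an A-algebra, F its field of fractions, and e : R → L ⊗[A] B an A-algebra homomorphism such that for every maximal ideal m of B, the composite of e with the natural map L ⊗[A] B → L ⊗[A] (B/m) is injective and sends every nonzero element of R to an element that is not a zero divisor in L ⊗[A] (B/m). Then there is a unique A-algebra homomorphism ẽ : F → L ⊗[A] B such that ẽ composed with the canonical map R → F equals e. -/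
/-!
An element of `L ⊗[A] B` lying in a maximal ideal `M` is killed by the reduction modulo
`m = M ∩ B`, since the kernel of that reduction is generated by `m`. As `B` is Artinian, `m` is
maximal, and the finite-dimensional `L`-algebra `L ⊗[A] (B/m)` is Artinian, where
non-zero-divisors are units. Hence `e` sends nonzero elements of `R` to units of `L ⊗[A] B`, and
the universal property of the fraction field gives the extension.
-/

theorem IsLocalization.existsUnique_algHom_comp_eq {A R S P : Type*} [CommSemiring A]
    [CommSemiring R] [Algebra A R] (M : Submonoid R)
    [CommSemiring S] [Algebra A S] [Algebra R S] [IsScalarTower A R S] [IsLocalization M S]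
    [CommSemiring P] [Algebra A P] (f : R →ₐ[A] P) (hf : ∀ y : M, IsUnit (f y)) :
    ∃! g : S →ₐ[A] P, g.comp (IsScalarTower.toAlgHom A R S) = f :=
  ⟨liftAlgHom hf, AlgHom.ext fun r ↦ lift_eq hf r, fun _ hg ↦
    algHom_ext M (hg.trans (AlgHom.ext fun r ↦ (lift_eq hf r).symm))⟩

theorem Ideal.notMem_of_isUnit_map {S T : Type*} [CommRing S] [Ring T] {f : S →+* T}
    (hf : Function.Surjective f) {M : Ideal S} (hM : M ≠ ⊤) (hker : RingHom.ker f ≤ M) {x : S}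
    (hx : IsUnit (f x)) : x ∉ M := by
  intro hxM
  obtain ⟨y, hy⟩ := hx.exists_right_inv
  obtain ⟨z, rfl⟩ := hf y
  have hsub : x * z - 1 ∈ M :=
    hker (by rw [RingHom.mem_ker, map_sub, map_mul, hy, map_one, sub_self])
  exact hM ((M.eq_top_iff_one).2 (by simpa using M.sub_mem (M.mul_mem_right z hxM) hsub))

section

variable {A B L : Type*} [CommRing A] [CommRing B] [Algebra A B] [CommRing L] [Algebra A L]

open Algebra.TensorProduct TensorProduct

theorem Algebra.TensorProduct.ker_map_mkₐ_comap_includeRight_le (M : Ideal (L ⊗[A] B)) :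
    RingHom.ker (map (AlgHom.id A L)
      (Ideal.Quotient.mkₐ A (M.comap (includeRight : B →ₐ[A] L ⊗[A] B)))) ≤ M := by
  rw [lTensor_ker _ (Ideal.Quotient.mkₐ_surjective A _), AlgHom.ker_coe, Ideal.Quotient.mkₐ_ker]
  exact Ideal.map_comap_le

end

section

open Algebra.TensorProduct TensorProduct

variable {A B L : Type*} [Field A] [CommRing B] [Algebra A B] [FiniteDimensional A B]
  [Field L] [Algebra A L]

theorem Algebra.TensorProduct.isUnit_of_forall_map_mkₐ_mem_nonZeroDivisors {x : L ⊗[A] B}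
    (hx : ∀ m : Ideal B, m.IsMaximal →
      map (AlgHom.id A L) (Ideal.Quotient.mkₐ A m) x ∈ nonZeroDivisors (L ⊗[A] (B ⧸ m))) :
    IsUnit x := by
  by_contra hnu
  obtain ⟨M, hM, hxM⟩ := exists_max_ideal_of_mem_nonunits hnu
  have := hM.isPrime
  have : IsArtinianRing B := IsArtinianRing.of_finite A B
  have : IsArtinianRing (L ⊗[A] (B ⧸ M.comap (includeRight : B →ₐ[A] L ⊗[A] B))) :=
    IsArtinianRing.of_finite L _
  exact Ideal.notMem_of_isUnit_map
    (map_surjective _ _ Function.surjective_id (Ideal.Quotient.mkₐ_surjective A _)) hM.ne_top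
    (ker_map_mkₐ_comap_includeRight_le M)
    (IsArtinianRing.isUnit_of_mem_nonZeroDivisors (hx _ inferInstance)) hxM

end

theorem exists_unique_extension_to_fractionField_general_general
    {A B L R F : Type*} [Field A] [CommRing B] [Algebra A B]
    [FiniteDimensional A B] [Field L] [Algebra A L]
    [CommRing R] [IsDomain R] [Algebra A R]
    [Field F] [Algebra R F] [IsFractionRing R F] [Algebra A F] [IsScalarTower A R F]
    (e : R →ₐ[A] TensorProduct A L B)
    (h : ∀ m : Ideal B, m.IsMaximal →
      Function.Injective
        ((Algebra.TensorProduct.map (AlgHom.id A L) (Ideal.Quotient.mkₐ A m)).comp e) ∧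
      ∀ r : R, r ≠ 0 →
        Algebra.TensorProduct.map (AlgHom.id A L) (Ideal.Quotient.mkₐ A m) (e r) ∈
          nonZeroDivisors (TensorProduct A L (B ⧸ m))) :
    ∃! etilde : F →ₐ[A] TensorProduct A L B,
      etilde.comp (IsScalarTower.toAlgHom A R F) = e :=
  IsLocalization.existsUnique_algHom_comp_eq (nonZeroDivisors R) e fun y ↦
    Algebra.TensorProduct.isUnit_of_forall_map_mkₐ_mem_nonZeroDivisors fun m hm ↦
      (h m hm).2 y (nonZeroDivisors.ne_zero y.2)

/-- Let `A` be a field of characteristic zero, `B` a finite-dimensional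
commutative `A`-algebra, and `L` a field extension of `A`.  Let `R` be an integral domain
which is an `A`-algebra, `F` its field of fractions, and `e : R → L ⊗[A] B` an `A`-algebra
homomorphism such that for every maximal ideal `m` of `B` the composite of `e` with
`L ⊗[A] B → L ⊗[A] (B/m)` is injective and sends every nonzero element of `R` to a
non-zero-divisor of `L ⊗[A] (B/m)`.  Then there is a unique `A`-algebra homomorphism
`ẽ : F → L ⊗[A] B` with `ẽ ∘ (R → F) = e`. -/
theorem exists_unique_extension_to_fractionField_general
    {A B L R F : Type*} [Field A] [CharZero A] [CommRing B] [Algebra A B]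
    [FiniteDimensional A B] [Field L] [Algebra A L]
    [CommRing R] [IsDomain R] [Algebra A R]
    [Field F] [Algebra R F] [IsFractionRing R F] [Algebra A F] [IsScalarTower A R F]
    (e : R →ₐ[A] TensorProduct A L B)
    (h : ∀ m : Ideal B, m.IsMaximal →
      Function.Injective
        ((Algebra.TensorProduct.map (AlgHom.id A L) (Ideal.Quotient.mkₐ A m)).comp e) ∧
      ∀ r : R, r ≠ 0 →
        Algebra.TensorProduct.map (AlgHom.id A L) (Ideal.Quotient.mkₐ A m) (e r) ∈
          nonZeroDivisors (TensorProduct A L (B ⧸ m))) :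
    ∃! etilde : F →ₐ[A] TensorProduct A L B,
      etilde.comp (IsScalarTower.toAlgHom A R F) = e :=
  exists_unique_extension_to_fractionField_general_general e h
end

section
/- Let A be a field of characteristic zero, B a finite-dimensional commutative A-algebra, L an algebraically closed field extension of A, F a subfield of L containing A, F' = {x ∈ L : x is algebraic over F}, and e : F → L ⊗[A] B an A-algebra homomorphism. For each maximal ideal m of B let σ_m : F → L ⊗[A] (B/m) denote the composite of e with the natural map L ⊗[A] B → L ⊗[A] (B/m). Suppose that for each maximal ideal m of B we are given an A-algebra homomorphism σ'_m : F' → L ⊗[A] (B/m) extending σ_m. Then there exists an A-algebra homomorphism e' : F' → L ⊗[A] B extending e such that for every maximal ideal m of B, the composite of e' with the natural map L ⊗[A] B → L ⊗[A] (B/m) equals σ'_m. -/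
/-!
`F'` is algebraic over `F`, hence separable in characteristic zero, hence formally smooth
over `F`. The map `L ⊗[A] B → ∏ₘ L ⊗[A] (B ⧸ m)` is surjective by the Chinese remainder
theorem, and its kernel is generated by the nilradical of the Artinian ring `B`, so it is
nilpotent. Viewing `L ⊗[A] B` as an `F`-algebra through `e`, formal smoothness lifts the family
`(σ'ₘ)ₘ` through this map to an `F`-algebra map `F' → L ⊗[A] B`, which is the required
extension of `e`.
-/

open Function

theorem Algebra.FormallySmooth.exists_lift_extending {R K K' S T : Type*} [CommRing R]
    [CommRing K] [CommRing K'] [CommRing S] [CommRing T] [Algebra R K] [Algebra R K'] [Algebra K K']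
    [IsScalarTower R K K'] [Algebra.FormallySmooth K K'] [Algebra R S] [Algebra R T]
    (e : K →ₐ[R] S) (q : S →ₐ[R] T) (hq : Surjective q) (hq' : IsNilpotent (RingHom.ker q))
    (g : K' →ₐ[R] T) (hg : ∀ x : K, g (algebraMap K K' x) = q (e x)) :
    ∃ f : K' →ₐ[R] S, (∀ x : K, f (algebraMap K K' x) = e x) ∧ q.comp f = g := by
  let : Algebra K S := e.toAlgebra
  let : Algebra K T := (q.comp e).toAlgebra
  have : IsScalarTower R K S := .of_algebraMap_eq fun r => (e.commutes r).symm
  let qK : S →ₐ[K] T := { q with commutes' := fun _ => rfl }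
  let gK : K' →ₐ[K] T := { g with commutes' := hg }
  let f := liftOfSurjective gK qK hq hq'
  exact ⟨f.restrictScalars R, f.commutes,
    AlgHom.ext (liftOfSurjective_apply gK qK hq hq')⟩

theorem Algebra.FormallySmooth.of_isAlgebraic_of_charZero {K R : Type*} [Field K] [CharZero K]
    [CommRing R] [IsDomain R] [Algebra K R] [Algebra.IsAlgebraic K R] :
    Algebra.FormallySmooth K R :=
  letI : Field R := (isField_of_isIntegral_of_isField' (Field.toIsField K)).toField
  have : Algebra.FormallyEtale K R := .of_isSeparable K R
  inferInstance

theorem Algebra.TensorProduct.isNilpotent_ker_map_id {R A C D : Type*} [CommRing R] [CommRing A]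
    [CommRing C] [CommRing D] [Algebra R A] [Algebra R C] [Algebra R D] (g : C →ₐ[R] D)
    (hg : Surjective g) (hg' : IsNilpotent (RingHom.ker g)) :
    IsNilpotent (RingHom.ker (map (AlgHom.id R A) g)) := by
  rw [lTensor_ker g hg]
  exact hg'.map (Ideal.mapHom _)

namespace IsArtinianRing

variable (R B : Type*) [CommRing R] [CommRing B] [Algebra R B] [IsArtinianRing B]

theorem surjective_pi_mkₐ :
    Surjective (AlgHom.pi fun I : MaximalSpectrum B => Ideal.Quotient.mkₐ R I.asIdeal) :=
  fun x => (Ideal.pi_quotient_surjective (fun _ _ h => MaximalSpectrum.isCoprime_of_ne h) x).imp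
    fun _ h => funext h

theorem ker_pi_mkₐ :
    RingHom.ker (AlgHom.pi fun I : MaximalSpectrum B => Ideal.Quotient.mkₐ R I.asIdeal) =
      nilradical B := by
  ext x
  simp [nilradical_eq_iInf, funext_iff, Ideal.Quotient.eq_zero_iff_mem]

end IsArtinianRing

namespace Algebra.TensorProduct

theorem pi_map_eq_piRight_comp_map_pi (R L B : Type*) {ι : Type*} [Fintype ι] [DecidableEq ι]
    {C : ι → Type*} [CommRing R] [CommRing L] [Algebra R L] [CommRing B] [Algebra R B]
    [∀ i, CommRing (C i)] [∀ i, Algebra R (C i)] (g : ∀ i, B →ₐ[R] C i) :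
    AlgHom.pi (fun i => map (AlgHom.id R L) (g i)) =
      (piRight R R L C).toAlgHom.comp (map (AlgHom.id R L) (AlgHom.pi g)) :=
  ext' fun _ _ => rfl

variable (R L : Type*) {B : Type*} [CommRing R] [CommRing L] [Algebra R L] [CommRing B]
  [Algebra R B] [IsArtinianRing B]

theorem surjective_pi_map_mkₐ :
    Surjective (AlgHom.pi fun I : MaximalSpectrum B =>
      map (AlgHom.id R L) (Ideal.Quotient.mkₐ R I.asIdeal)) := by
  classical
  have := Fintype.ofFinite (MaximalSpectrum B)
  rw [pi_map_eq_piRight_comp_map_pi]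
  exact (piRight R R L fun I : MaximalSpectrum B => B ⧸ I.asIdeal).surjective.comp
    (map_surjective _ _ surjective_id (IsArtinianRing.surjective_pi_mkₐ R B))

theorem isNilpotent_ker_pi_map_mkₐ :
    IsNilpotent (RingHom.ker (AlgHom.pi fun I : MaximalSpectrum B =>
      map (AlgHom.id R L) (Ideal.Quotient.mkₐ R I.asIdeal))) := by
  classical
  have := Fintype.ofFinite (MaximalSpectrum B)
  let π : B →ₐ[R] ∀ I : MaximalSpectrum B, B ⧸ I.asIdeal :=
    AlgHom.pi fun I => Ideal.Quotient.mkₐ R I.asIdeal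
  have hπ : IsNilpotent (RingHom.ker π) :=
    IsArtinianRing.ker_pi_mkₐ R B ▸ IsArtinianRing.isNilpotent_nilradical
  let e := piRight R R L fun I : MaximalSpectrum B => B ⧸ I.asIdeal
  rw [pi_map_eq_piRight_comp_map_pi]
  convert isNilpotent_ker_map_id (A := L) π (IsArtinianRing.surjective_pi_mkₐ R B) hπ using 1
  exact RingHom.ker_comp_of_injective _ (f := e.toAlgHom.toRingHom) e.injective

end Algebra.TensorProduct

theorem exists_extension_with_prescribed_residue_homs_general
    {A B L : Type*} [Field A] [CharZero A] [CommRing B] [Algebra A B]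
    [FiniteDimensional A B]
    [Field L] [Algebra A L]
    (F : IntermediateField A L)
    (F' : Subalgebra A L) (hF' : ∀ x : L, x ∈ F' ↔ IsAlgebraic F x)
    (e : F →ₐ[A] TensorProduct A L B)
    (σ' : ∀ m : Ideal B, m.IsMaximal → (F' →ₐ[A] TensorProduct A L (B ⧸ m)))
    (hσ' : ∀ (m : Ideal B) (hm : m.IsMaximal) (x : F) (hx : (x : L) ∈ F'),
      σ' m hm ⟨(x : L), hx⟩ =
        Algebra.TensorProduct.map (AlgHom.id A L) (Ideal.Quotient.mkₐ A m) (e x)) :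
    ∃ e' : F' →ₐ[A] TensorProduct A L B,
      (∀ (x : F) (hx : (x : L) ∈ F'), e' ⟨(x : L), hx⟩ = e x) ∧
      ∀ (m : Ideal B) (hm : m.IsMaximal),
        (Algebra.TensorProduct.map (AlgHom.id A L) (Ideal.Quotient.mkₐ A m)).comp e' =
          σ' m hm := by
  have hFF' : F.toSubalgebra ≤ F' := fun x hx =>
    (hF' x).2 (isAlgebraic_algebraMap (⟨x, hx⟩ : F))
  let : Algebra F F' := (Subalgebra.inclusion hFF').toAlgebra
  have : IsScalarTower A F F' := .of_algebraMap_eq fun _ => rfl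
  have : IsScalarTower F F' L := .of_algebraMap_eq fun _ => rfl
  have : Algebra.IsAlgebraic F F' := ⟨fun x => (isAlgebraic_algHom_iff
    (IsScalarTower.toAlgHom F F' L) Subtype.val_injective).mp ((hF' x).1 x.2)⟩
  have : CharZero F := charZero_of_injective_algebraMap (algebraMap A F).injective
  have : Algebra.FormallySmooth F F' := .of_isAlgebraic_of_charZero
  have : IsArtinianRing B := .of_finite A B
  obtain ⟨e', he', hqe'⟩ := Algebra.FormallySmooth.exists_lift_extending e _
    (Algebra.TensorProduct.surjective_pi_map_mkₐ A L)
    (Algebra.TensorProduct.isNilpotent_ker_pi_map_mkₐ A L)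
    (AlgHom.pi fun I : MaximalSpectrum B => σ' I.asIdeal I.isMaximal)
    (fun x => funext fun I => hσ' I.asIdeal I.isMaximal x _)
  exact ⟨e', fun x _ => he' x, fun m hm => AlgHom.ext fun y =>
    congr_fun (AlgHom.congr_fun hqe' y) ⟨m, hm⟩⟩

/-- Let `A` be a field of characteristic zero, `B` a finite-dimensional
commutative `A`-algebra, `L` an algebraically closed field extension of `A`, `F` a subfield of
`L` containing `A`, `F' = {x ∈ L : x algebraic over F}`, and `e : F → L ⊗[A] B` an `A`-algebra
homomorphism.  For each maximal ideal `m` of `B` let `σ_m : F → L ⊗[A] (B/m)` be the composite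
of `e` with the natural map `L ⊗[A] B → L ⊗[A] (B/m)`, and suppose we are given `A`-algebra
homomorphisms `σ'_m : F' → L ⊗[A] (B/m)` extending the `σ_m`.  Then there is an `A`-algebra
homomorphism `e' : F' → L ⊗[A] B` extending `e` such that for every maximal ideal `m` the
composite of `e'` with `L ⊗[A] B → L ⊗[A] (B/m)` equals `σ'_m`. -/
theorem exists_extension_with_prescribed_residue_homs
    {A B L : Type*} [Field A] [CharZero A] [CommRing B] [Algebra A B]
    [FiniteDimensional A B]
    [Field L] [Algebra A L] [IsAlgClosed L]
    (F : IntermediateField A L)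
    (F' : Subalgebra A L) (hF' : ∀ x : L, x ∈ F' ↔ IsAlgebraic F x)
    (e : F →ₐ[A] TensorProduct A L B)
    (σ' : ∀ m : Ideal B, m.IsMaximal → (F' →ₐ[A] TensorProduct A L (B ⧸ m)))
    (hσ' : ∀ (m : Ideal B) (hm : m.IsMaximal) (x : F) (hx : (x : L) ∈ F'),
      σ' m hm ⟨(x : L), hx⟩ =
        Algebra.TensorProduct.map (AlgHom.id A L) (Ideal.Quotient.mkₐ A m) (e x)) :
    ∃ e' : F' →ₐ[A] TensorProduct A L B,
      (∀ (x : F) (hx : (x : L) ∈ F'), e' ⟨(x : L), hx⟩ = e x) ∧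
      ∀ (m : Ideal B) (hm : m.IsMaximal),
        (Algebra.TensorProduct.map (AlgHom.id A L) (Ideal.Quotient.mkₐ A m)).comp e' =
          σ' m hm :=
  exists_extension_with_prescribed_residue_homs_general F F' hF' e σ' hσ'
end
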